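/- arXiv:2204.09266 — 2 statements merged into one kernel-verified Lean document; each statement's English description precedes it below -/
import Mathlib

section
/- Let f : ℝ^d → ℝ be twice continuously differentiable with λmin·I ⪯ ∇²f(x) ⪯ λmax·I for all x and L-Lipschitz Hessian, with unique minimizer x*, and let β ∈ (0,1/2). Suppose x ∈ N_ν, H̃ is a symmetric matrix with (1-ψ)H(x) ⪯ H̃ ⪯ (1+ψ)H(x), and p = -H̃⁻¹∇f(x), where 0 < ν ≤ (2/3)(1/2 - β) and 0 < ψ ≤ (1/2 - β)/(3/2 - β). Then ‖x + p - x*‖_{H*} ≤ 3·{ (L/λmin^{3/2})·‖x - x*‖²_{H*} + ‖I - H(x)^{-1/2} H̃ H(x)^{-1/2}‖ · ‖x - x*‖_{H*} }. -/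
open Real
open scoped BigOperators Matrix

open scoped ComplexOrder in
/-- Square root of a positive semidefinite matrix (removed from Mathlib; old definition). -/
noncomputable def Matrix.PosSemidef.sqrt {n 𝕜 : Type*} [Fintype n] [RCLike 𝕜] [DecidableEq n]
    {A : Matrix n n 𝕜} (hA : A.PosSemidef) : Matrix n n 𝕜 :=
  hA.1.eigenvectorUnitary.1 * Matrix.diagonal ((↑) ∘ (√·) ∘ hA.1.eigenvalues) *
    (star hA.1.eigenvectorUnitary : Matrix n n 𝕜)

/-- Spectral norm (ℓ₂ operator norm) of a real matrix. -/
noncomputable def specNorm {d : ℕ} (A : Matrix (Fin d) (Fin d) ℝ) : ℝ :=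
  ‖Matrix.toEuclideanCLM (𝕜 := ℝ) A‖

/-- Euclidean (ℓ₂) norm of a vector. -/
noncomputable def vnorm {d : ℕ} (v : Fin d → ℝ) : ℝ := Real.sqrt (∑ i, v i ^ 2)

/-- The norm ‖v‖_A = √(vᵀAv) induced by a positive semidefinite matrix A. -/
noncomputable def Mnorm {d : ℕ} (A : Matrix (Fin d) (Fin d) ℝ) (v : Fin d → ℝ) : ℝ :=
  Real.sqrt (dotProduct v (A.mulVec v))

/-!
Write `A = H(x)`, `S = A^{1/2}`, `M = S⁻¹ H̃ S⁻¹` and `e = x - x*`. The new error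
`t = e - H̃⁻¹ ∇f(x)` satisfies `M S t = (M - I) S e + S⁻¹ (A e - ∇f(x))`, and `M ⪰ (1 - ψ) I`, so
`(1 - ψ) ‖S t‖ ≤ ‖I - M‖ ‖S e‖ + ‖S⁻¹ (A e - ∇f(x))‖`. Since `∇f(x*) = 0`, the mean value
inequality for the gradient, whose derivative `H` is `L`-Lipschitz, gives `‖A e - ∇f(x)‖ ≤ L ‖e‖²`.
Finally `‖·‖_A = ‖S ·‖` and `‖·‖_{H*}` differ by a factor at most `√(1 + L ‖e‖ / λmin) ≤ √(4/3)`
on `N_ν`, and `1 / (1 - ψ) ≤ 3/2`, which produces the constant `2 ≤ 3`.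
-/

section Vectors

variable {d : ℕ}

theorem vnorm_eq_norm_toLp (v : Fin d → ℝ) : vnorm v = ‖WithLp.toLp 2 v‖ := by
  simp [vnorm, EuclideanSpace.norm_eq, sq_abs]

theorem dotProduct_eq_inner_toLp (v w : Fin d → ℝ) :
    v ⬝ᵥ w = inner ℝ (WithLp.toLp 2 v) (WithLp.toLp 2 w) := by
  simp [EuclideanSpace.inner_toLp_toLp, dotProduct_comm]

theorem toLp_mulVec (A : Matrix (Fin d) (Fin d) ℝ) (v : Fin d → ℝ) :
    WithLp.toLp 2 (A *ᵥ v) = Matrix.toEuclideanCLM (𝕜 := ℝ) A (WithLp.toLp 2 v) :=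
  rfl

theorem vnorm_nonneg (v : Fin d → ℝ) : 0 ≤ vnorm v := Real.sqrt_nonneg _

theorem vnorm_add_le (v w : Fin d → ℝ) : vnorm (v + w) ≤ vnorm v + vnorm w := by
  simpa only [vnorm_eq_norm_toLp, WithLp.toLp_add] using norm_add_le _ _

theorem dotProduct_self_eq_vnorm_sq (v : Fin d → ℝ) : v ⬝ᵥ v = vnorm v ^ 2 := by
  rw [vnorm_eq_norm_toLp, dotProduct_eq_inner_toLp, real_inner_self_eq_norm_sq]

theorem dotProduct_le_vnorm_mul_vnorm (v w : Fin d → ℝ) : v ⬝ᵥ w ≤ vnorm v * vnorm w := by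
  simpa only [dotProduct_eq_inner_toLp, vnorm_eq_norm_toLp] using real_inner_le_norm _ _

theorem specNorm_nonneg (A : Matrix (Fin d) (Fin d) ℝ) : 0 ≤ specNorm A := norm_nonneg _

theorem specNorm_sub_comm (A B : Matrix (Fin d) (Fin d) ℝ) :
    specNorm (A - B) = specNorm (B - A) := by
  simp only [specNorm, map_sub, norm_sub_rev]

theorem vnorm_mulVec_le (A : Matrix (Fin d) (Fin d) ℝ) (v : Fin d → ℝ) :
    vnorm (A *ᵥ v) ≤ specNorm A * vnorm v := by
  simpa only [vnorm_eq_norm_toLp, toLp_mulVec, specNorm] using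
    (Matrix.toEuclideanCLM (𝕜 := ℝ) A).le_opNorm _

theorem dotProduct_mulVec_le (A : Matrix (Fin d) (Fin d) ℝ) (v : Fin d → ℝ) :
    v ⬝ᵥ A *ᵥ v ≤ specNorm A * vnorm v ^ 2 :=
  calc v ⬝ᵥ A *ᵥ v ≤ vnorm v * (specNorm A * vnorm v) :=
        (dotProduct_le_vnorm_mul_vnorm _ _).trans
          (mul_le_mul_of_nonneg_left (vnorm_mulVec_le A v) (vnorm_nonneg v))
    _ = specNorm A * vnorm v ^ 2 := by ring

theorem mul_vnorm_sq_le_dotProduct_mulVec {A : Matrix (Fin d) (Fin d) ℝ} {c : ℝ}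
    (h : (A - c • 1).PosSemidef) (v : Fin d → ℝ) : c * vnorm v ^ 2 ≤ v ⬝ᵥ A *ᵥ v := by
  have := h.dotProduct_mulVec_nonneg v
  simp only [star_trivial, Matrix.sub_mulVec, Matrix.smul_mulVec, Matrix.one_mulVec,
    dotProduct_sub, dotProduct_smul, smul_eq_mul, dotProduct_self_eq_vnorm_sq] at this
  linarith

theorem mul_vnorm_le_vnorm_mulVec {A : Matrix (Fin d) (Fin d) ℝ} {c : ℝ} (hc : 0 ≤ c)
    (h : (A - c • 1).PosSemidef) (v : Fin d → ℝ) : c * vnorm v ≤ vnorm (A *ᵥ v) := by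
  have := (mul_vnorm_sq_le_dotProduct_mulVec h v).trans (dotProduct_le_vnorm_mul_vnorm _ _)
  nlinarith [vnorm_nonneg v, vnorm_nonneg (A *ᵥ v)]

theorem sqrt_mul_vnorm_le_Mnorm {A : Matrix (Fin d) (Fin d) ℝ} {c : ℝ}
    (h : (A - c • 1).PosSemidef) (v : Fin d → ℝ) : √c * vnorm v ≤ Mnorm A v := by
  rw [← Real.sqrt_sq (vnorm_nonneg v), ← Real.sqrt_mul' _ (sq_nonneg _)]
  exact Real.sqrt_le_sqrt (mul_vnorm_sq_le_dotProduct_mulVec h v)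

theorem Mnorm_le_sqrt_mul_Mnorm {A B : Matrix (Fin d) (Fin d) ℝ} {l δ : ℝ} (hl : 0 < l)
    (hA : (A - l • 1).PosSemidef) (hAB : specNorm (B - A) ≤ δ) (v : Fin d → ℝ) :
    Mnorm B v ≤ √(1 + δ / l) * Mnorm A v := by
  have hlow := mul_vnorm_sq_le_dotProduct_mulVec hA v
  have hδ : 0 ≤ δ := (specNorm_nonneg _).trans hAB
  have hdiff : v ⬝ᵥ B *ᵥ v - v ⬝ᵥ A *ᵥ v ≤ δ / l * (v ⬝ᵥ A *ᵥ v) := by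
    calc v ⬝ᵥ B *ᵥ v - v ⬝ᵥ A *ᵥ v = v ⬝ᵥ (B - A) *ᵥ v := by
          rw [Matrix.sub_mulVec, dotProduct_sub]
      _ ≤ δ * vnorm v ^ 2 :=
          (dotProduct_mulVec_le _ _).trans (mul_le_mul_of_nonneg_right hAB (sq_nonneg _))
      _ = δ / l * (l * vnorm v ^ 2) := by field_simp
      _ ≤ δ / l * (v ⬝ᵥ A *ᵥ v) := mul_le_mul_of_nonneg_left hlow (by positivity)
  rw [Mnorm, Mnorm, ← Real.sqrt_mul' _ (le_trans (by positivity) hlow)]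
  exact Real.sqrt_le_sqrt (by linarith)

end Vectors

namespace Matrix.PosSemidef

open scoped ComplexOrder

variable {n 𝕜 : Type*} [Fintype n] [DecidableEq n] [RCLike 𝕜] {A : Matrix n n 𝕜}

theorem sqrt_mul_self (hA : A.PosSemidef) : hA.sqrt * hA.sqrt = A := by
  set U : Matrix n n 𝕜 := ↑hA.1.eigenvectorUnitary
  set D : Matrix n n 𝕜 := Matrix.diagonal ((↑) ∘ (√·) ∘ hA.1.eigenvalues)
  have hU : star U * U = 1 := Unitary.coe_star_mul_self hA.1.eigenvectorUnitary
  have hD : D * D = Matrix.diagonal ((↑) ∘ hA.1.eigenvalues) := by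
    simp only [D, Matrix.diagonal_mul_diagonal, Function.comp_apply, ← RCLike.ofReal_mul,
      Real.mul_self_sqrt (hA.eigenvalues_nonneg _)]
    rfl
  calc hA.sqrt * hA.sqrt = U * (D * (star U * U) * D) * star U := by
        simp only [sqrt, U, D, mul_assoc]
    _ = A := by
        rw [hU, mul_one, hD]
        exact hA.1.spectral_theorem.symm

theorem isHermitian_sqrt (hA : A.PosSemidef) : hA.sqrt.IsHermitian :=
  (PosSemidef.diagonal fun i => by simp [Real.sqrt_nonneg]).mul_mul_conjTranspose_same
    (hA.1.eigenvectorUnitary : Matrix n n 𝕜) |>.isHermitian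

end Matrix.PosSemidef

theorem Matrix.PosSemidef.Mnorm_eq_vnorm_sqrt_mulVec {d : ℕ} {A : Matrix (Fin d) (Fin d) ℝ}
    (hA : A.PosSemidef) (v : Fin d → ℝ) : Mnorm A v = vnorm (hA.sqrt *ᵥ v) := by
  have hS : hA.sqrtᵀ = hA.sqrt := Matrix.isHermitian_iff_isSymm.mp hA.isHermitian_sqrt
  have hquad : v ⬝ᵥ A *ᵥ v = hA.sqrt *ᵥ v ⬝ᵥ hA.sqrt *ᵥ v := by
    conv_lhs => rw [← hA.sqrt_mul_self, ← Matrix.mulVec_mulVec, Matrix.dotProduct_mulVec,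
      ← Matrix.mulVec_transpose, hS]
  rw [Mnorm, hquad, dotProduct_self_eq_vnorm_sq, Real.sqrt_sq (vnorm_nonneg _)]

section Conjugation

variable {n : Type*} [Fintype n] [DecidableEq n]

theorem Matrix.posSemidef_inv_mul_mul_inv_sub_smul_one {A S Ht : Matrix n n ℝ} {c : ℝ}
    (hS : S.IsHermitian) (hSA : S * S = A) (hSu : IsUnit S.det)
    (h : (Ht - c • A).PosSemidef) : (S⁻¹ * Ht * S⁻¹ - c • 1).PosSemidef := by
  have hSinv : S⁻¹ * A * S⁻¹ = 1 := by
    rw [← hSA, ← mul_assoc, Matrix.nonsing_inv_mul _ hSu, one_mul, Matrix.mul_nonsing_inv _ hSu]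
  have := h.mul_mul_conjTranspose_same S⁻¹
  rwa [Matrix.conjTranspose_nonsing_inv, hS.eq, Matrix.mul_sub, Matrix.sub_mul,
    Matrix.mul_smul, Matrix.smul_mul, hSinv] at this

variable {R : Type*} [CommRing R]

theorem Matrix.conj_mulVec_newton_error {A S Ht : Matrix n n R}
    (hSA : S * S = A) (hSu : IsUnit S.det) (hHtu : IsUnit Ht.det) (e w : n → R) :
    (S⁻¹ * Ht * S⁻¹) *ᵥ (S *ᵥ (e - Ht⁻¹ *ᵥ w)) =
      (S⁻¹ * Ht * S⁻¹ - 1) *ᵥ (S *ᵥ e) + S⁻¹ *ᵥ (A *ᵥ e - w) := by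
  have hSS : S⁻¹ * S = 1 := Matrix.nonsing_inv_mul _ hSu
  have hHt : Ht * Ht⁻¹ = 1 := Matrix.mul_nonsing_inv _ hHtu
  have hMS : S⁻¹ * Ht * S⁻¹ * S = S⁻¹ * Ht := by rw [mul_assoc, hSS, mul_one]
  have hSA' : S⁻¹ * A = S := by rw [← hSA, ← mul_assoc, hSS, one_mul]
  rw [Matrix.mulVec_mulVec, hMS, Matrix.mulVec_sub, Matrix.mulVec_mulVec, mul_assoc S⁻¹, hHt,
    mul_one, Matrix.sub_mulVec, Matrix.one_mulVec, Matrix.mulVec_mulVec, hMS, Matrix.mulVec_sub,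
    Matrix.mulVec_mulVec, hSA']
  abel

end Conjugation

theorem Matrix.posDef_of_posSemidef_sub_smul_one {n : Type*} [Fintype n] [DecidableEq n]
    {A : Matrix n n ℝ} {l : ℝ} (hl : 0 < l) (h : (A - l • 1).PosSemidef) : A.PosDef := by
  simpa using Matrix.PosDef.posSemidef_add h (Matrix.PosDef.one.smul hl)

theorem mul_Mnorm_newton_error_le {d : ℕ} {A B Ht : Matrix (Fin d) (Fin d) ℝ} {l δ c : ℝ}
    (hA : A.PosSemidef) (hl : 0 < l) (hAl : (A - l • 1).PosSemidef)
    (hBl : (B - l • 1).PosSemidef) (hAB : specNorm (A - B) ≤ δ) (hc : 0 < c)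
    (hHt : (Ht - c • A).PosSemidef) (e w : Fin d → ℝ) :
    c * Mnorm B (e - Ht⁻¹ *ᵥ w) ≤
      √(1 + δ / l) * (specNorm (1 - hA.sqrt⁻¹ * Ht * hA.sqrt⁻¹) * (√(1 + δ / l) * Mnorm B e) +
        vnorm (A *ᵥ e - w) / √l) := by
  set S := hA.sqrt
  set M := S⁻¹ * Ht * S⁻¹
  set t := e - Ht⁻¹ *ᵥ w
  have hApd := Matrix.posDef_of_posSemidef_sub_smul_one hl hAl
  have hSu : IsUnit S.det := by
    have := (Matrix.isUnit_iff_isUnit_det A).mp hApd.isUnit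
    rw [← hA.sqrt_mul_self, Matrix.det_mul] at this
    exact isUnit_of_mul_isUnit_left this
  have hHtpd : Ht.PosDef := by simpa using Matrix.PosDef.posSemidef_add hHt (hApd.smul hc)
  have hHtu : IsUnit Ht.det := (Matrix.isUnit_iff_isUnit_det Ht).mp hHtpd.isUnit
  have hSinv (z : Fin d → ℝ) : vnorm (S⁻¹ *ᵥ z) ≤ vnorm z / √l := by
    have := sqrt_mul_vnorm_le_Mnorm hAl (S⁻¹ *ᵥ z)
    rw [hA.Mnorm_eq_vnorm_sqrt_mulVec, Matrix.mulVec_mulVec, Matrix.mul_nonsing_inv _ hSu,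
      Matrix.one_mulVec] at this
    rw [le_div_iff₀ (Real.sqrt_pos.mpr hl)]
    linarith
  have hBt : Mnorm B t ≤ √(1 + δ / l) * vnorm (S *ᵥ t) := by
    rw [← hA.Mnorm_eq_vnorm_sqrt_mulVec]
    exact Mnorm_le_sqrt_mul_Mnorm hl hAl (specNorm_sub_comm A B ▸ hAB) t
  have hMlow : c * vnorm (S *ᵥ t) ≤ vnorm (M *ᵥ (S *ᵥ t)) :=
    mul_vnorm_le_vnorm_mulVec hc.le (Matrix.posSemidef_inv_mul_mul_inv_sub_smul_one
      hA.isHermitian_sqrt hA.sqrt_mul_self hSu hHt) _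
  have hMSt : vnorm (M *ᵥ (S *ᵥ t)) ≤
      specNorm (1 - M) * vnorm (S *ᵥ e) + vnorm (S⁻¹ *ᵥ (A *ᵥ e - w)) := by
    rw [Matrix.conj_mulVec_newton_error hA.sqrt_mul_self hSu hHtu, specNorm_sub_comm]
    exact (vnorm_add_le _ _).trans (add_le_add_left (vnorm_mulVec_le _ _) _)
  have hSe : vnorm (S *ᵥ e) ≤ √(1 + δ / l) * Mnorm B e := by
    rw [← hA.Mnorm_eq_vnorm_sqrt_mulVec]
    exact Mnorm_le_sqrt_mul_Mnorm hl hBl hAB e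
  calc c * Mnorm B t ≤ √(1 + δ / l) * (c * vnorm (S *ᵥ t)) :=
        (mul_le_mul_of_nonneg_left hBt hc.le).trans_eq (mul_left_comm _ _ _)
    _ ≤ √(1 + δ / l) * (specNorm (1 - M) * (√(1 + δ / l) * Mnorm B e) +
        vnorm (A *ᵥ e - w) / √l) := by
      gcongr
      exact hMlow.trans (hMSt.trans (add_le_add
        (mul_le_mul_of_nonneg_left hSe (specNorm_nonneg _)) (hSinv _)))

theorem norm_image_sub_sub_fderiv_le_of_lipschitz {E F : Type*} [NormedAddCommGroup E]
    [NormedSpace ℝ E] [NormedAddCommGroup F] [NormedSpace ℝ F] {G : E → F} {G' : E → E →L[ℝ] F}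
    {L : ℝ} (hL : 0 ≤ L) (hG : ∀ z, HasFDerivAt G (G' z) z)
    (hG' : ∀ z w, ‖G' z - G' w‖ ≤ L * ‖z - w‖) (x y : E) :
    ‖G y - G x - G' x (y - x)‖ ≤ L * ‖y - x‖ ^ 2 := by
  have hbound (z : E) (hz : z ∈ segment ℝ x y) : ‖G' z - G' x‖ ≤ L * ‖y - x‖ :=
    (hG' z x).trans (mul_le_mul_of_nonneg_left (norm_sub_le_of_mem_segment hz) hL)
  have := (convex_segment x y).norm_image_sub_le_of_norm_hasFDerivWithin_le'
    (fun z _ => (hG z).hasFDerivWithinAt) hbound (left_mem_segment ℝ x y)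
    (right_mem_segment ℝ x y)
  linarith

section Gradient

variable {d : ℕ} {f : (Fin d → ℝ) → ℝ} {g : (Fin d → ℝ) → Fin d → ℝ}
  {H : (Fin d → ℝ) → Matrix (Fin d) (Fin d) ℝ}

theorem gradient_apply_eq_fderiv (hgrad : ∀ y v, fderiv ℝ f y v = g y ⬝ᵥ v) (y : Fin d → ℝ)
    (i : Fin d) : g y i = fderiv ℝ f y (Pi.single i 1) := by
  rw [hgrad, dotProduct_single_one]

theorem gradient_eq_zero_of_isLocalMin (hgrad : ∀ y v, fderiv ℝ f y v = g y ⬝ᵥ v)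
    {x : Fin d → ℝ} (hx : IsLocalMin f x) : g x = 0 := by
  ext i
  simp [gradient_apply_eq_fderiv hgrad, hx.fderiv_eq_zero]

theorem hasFDerivAt_gradient (hf : ContDiff ℝ 2 f) (hgrad : ∀ y v, fderiv ℝ f y v = g y ⬝ᵥ v)
    (hhess : ∀ y u v, fderiv ℝ (fun z => fderiv ℝ f z v) y u = u ⬝ᵥ H y *ᵥ v)
    (hH : ∀ y, (H y).IsSymm) (y : Fin d → ℝ) :
    HasFDerivAt g (Matrix.toLin' (H y)).toContinuousLinearMap y := by
  have hf' : Differentiable ℝ (fderiv ℝ f) :=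
    (hf.fderiv_right (m := 1) le_rfl).differentiable one_ne_zero
  rw [show g = fun z i => fderiv ℝ f z (Pi.single i 1) from
    funext₂ (gradient_apply_eq_fderiv hgrad)]
  refine hasFDerivAt_pi'.mpr fun i => ?_
  convert ((hf' y).clm_apply (differentiableAt_const (Pi.single i 1))).hasFDerivAt using 1
  ext u
  rw [hhess, Matrix.mulVec_single_one]
  simp [Matrix.mulVec, dotProduct, (hH y).apply, mul_comm]

theorem vnorm_hessian_mulVec_sub_gradient_sub_le (hf : ContDiff ℝ 2 f)
    (hgrad : ∀ y v, fderiv ℝ f y v = g y ⬝ᵥ v)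
    (hhess : ∀ y u v, fderiv ℝ (fun z => fderiv ℝ f z v) y u = u ⬝ᵥ H y *ᵥ v)
    (hH : ∀ y, (H y).IsSymm) {L : ℝ} (hL : 0 ≤ L)
    (hLip : ∀ y z, specNorm (H y - H z) ≤ L * vnorm (y - z)) (x y : Fin d → ℝ) :
    vnorm (H x *ᵥ (x - y) - (g x - g y)) ≤ L * vnorm (x - y) ^ 2 := by
  set G : EuclideanSpace ℝ (Fin d) → EuclideanSpace ℝ (Fin d) :=
    fun v => WithLp.toLp 2 (g (WithLp.ofLp v))
  have hG (v : EuclideanSpace ℝ (Fin d)) :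
      HasFDerivAt G (Matrix.toEuclideanCLM (𝕜 := ℝ) (H (WithLp.ofLp v))) v :=
    (PiLp.hasFDerivAt_toLp 2 _).comp v
      ((hasFDerivAt_gradient hf hgrad hhess hH _).comp v (PiLp.hasFDerivAt_ofLp 2 v))
  have hG' (z w : EuclideanSpace ℝ (Fin d)) :
      ‖Matrix.toEuclideanCLM (𝕜 := ℝ) (H (WithLp.ofLp z)) -
        Matrix.toEuclideanCLM (𝕜 := ℝ) (H (WithLp.ofLp w))‖ ≤ L * ‖z - w‖ := by
    simpa [← map_sub, specNorm, vnorm_eq_norm_toLp] using hLip (WithLp.ofLp z) (WithLp.ofLp w)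
  have := norm_image_sub_sub_fderiv_le_of_lipschitz hL hG hG' (WithLp.toLp 2 x) (WithLp.toLp 2 y)
  rw [norm_sub_rev (WithLp.toLp 2 y)] at this
  convert this using 2
  · rw [vnorm_eq_norm_toLp]
    congr 1
    simp only [G, ← WithLp.toLp_sub, ← toLp_mulVec]
    rw [← neg_sub x y, Matrix.mulVec_neg]
    congr 1
    abel
  · rw [vnorm_eq_norm_toLp, WithLp.toLp_sub]

end Gradient

theorem le_three_mul_of_newton_bound {T ρ r q Q ε ψ : ℝ} (hψ : ψ ≤ 1 / 3) (hε0 : 0 ≤ ε)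
    (hε : ε ≤ 1 / 3) (hρ : 0 ≤ ρ) (hr : 0 ≤ r) (hq0 : 0 ≤ q) (hqQ : q ≤ Q)
    (hT : (1 - ψ) * T ≤ √(1 + ε) * (ρ * (√(1 + ε) * r) + q)) : T ≤ 3 * (Q + ρ * r) := by
  have hσσ : √(1 + ε) * √(1 + ε) = 1 + ε := Real.mul_self_sqrt (by linarith)
  have hσ1 : 1 ≤ √(1 + ε) := Real.one_le_sqrt.mpr (by linarith)
  have hρr : 0 ≤ ρ * r := mul_nonneg hρ hr
  have hσ : √(1 + ε) ≤ 4 / 3 := by nlinarith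
  have hsum : (1 - ψ) * T ≤ 4 / 3 * (ρ * r + Q) := by
    calc (1 - ψ) * T ≤ ρ * r * (√(1 + ε) * √(1 + ε)) + √(1 + ε) * q := by linarith
      _ ≤ ρ * r * (4 / 3) + 4 / 3 * Q := by
        rw [hσσ]
        gcongr
        linarith
      _ = 4 / 3 * (ρ * r + Q) := by ring
  nlinarith

theorem newton_error_le_of_bounds {l L ν ψ η r p ρ T : ℝ} (hl : 0 < l) (hL : 0 < L)
    (hν : ν ≤ 1 / 3) (hψ : ψ ≤ 1 / 3) (hη0 : 0 ≤ η) (hρ : 0 ≤ ρ) (hη : √l * η ≤ r)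
    (hr : r ≤ ν * l ^ ((3 : ℝ) / 2) / L) (hp : p ≤ L * η ^ 2) (hp0 : 0 ≤ p)
    (hT : (1 - ψ) * T ≤ √(1 + L * η / l) * (ρ * (√(1 + L * η / l) * r) + p / √l)) :
    T ≤ 3 * (L / l ^ ((3 : ℝ) / 2) * r ^ 2 + ρ * r) := by
  have hl32 : l ^ ((3 : ℝ) / 2) = l * √l := by
    rw [show (3 : ℝ) / 2 = 1 + 1 / 2 by norm_num, Real.rpow_add hl, Real.rpow_one,
      Real.sqrt_eq_rpow]
  rw [hl32] at hr ⊢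
  set s := √l
  have hs : 0 < s := Real.sqrt_pos.mpr hl
  have hss : s * s = l := Real.mul_self_sqrt hl.le
  have hr0 : 0 ≤ r := (mul_nonneg hs.le hη0).trans hη
  have hLr : L * r ≤ ν * (l * s) := by rwa [le_div_iff₀ hL, mul_comm] at hr
  have hε : L * η / l ≤ 1 / 3 := by
    rw [div_le_iff₀ hl]
    refine le_of_mul_le_mul_right ?_ hs
    calc L * η * s = L * (s * η) := by ring
      _ ≤ L * r := mul_le_mul_of_nonneg_left hη hL.le
      _ ≤ ν * (l * s) := hLr
      _ ≤ 1 / 3 * (l * s) := by gcongr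
      _ = 1 / 3 * l * s := by ring
  have hq : p / s ≤ L / (l * s) * r ^ 2 := by
    rw [div_le_iff₀ hs, div_mul_eq_mul_div, div_mul_eq_mul_div, le_div_iff₀ (by positivity)]
    calc p * (l * s) ≤ L * η ^ 2 * (l * s) := by gcongr
      _ = L * (s * η) ^ 2 * s := by rw [← hss]; ring
      _ ≤ L * r ^ 2 * s := by gcongr
  exact le_three_mul_of_newton_bound hψ (by positivity) hε hρ hr0 (by positivity) hq hT

theorem stmt7_general
    {d : ℕ} (f : (Fin d → ℝ) → ℝ) (g : (Fin d → ℝ) → Fin d → ℝ)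
    (H : (Fin d → ℝ) → Matrix (Fin d) (Fin d) ℝ)
    (lmin L : ℝ) (hlmin : 0 < lmin) (hL : 0 < L)
    (hf : ContDiff ℝ 2 f)
    (hgrad : ∀ y v, fderiv ℝ f y v = dotProduct (g y) v)
    (hhess : ∀ y u v, fderiv ℝ (fun z => fderiv ℝ f z v) y u =
      dotProduct u ((H y).mulVec v))
    (hpsd : ∀ y, (H y).PosSemidef)
    (hlow : ∀ y, (H y - lmin • (1 : Matrix (Fin d) (Fin d) ℝ)).PosSemidef)
    (hLip : ∀ y z, specNorm (H y - H z) ≤ L * vnorm (y - z))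
    (xstar : Fin d → ℝ) (hmin : ∀ y, f xstar ≤ f y)
    (β ν ψ : ℝ) (hβ0 : 0 < β) (hβ : β < 1 / 2)
    (hν : ν ≤ (2 / 3) * (1 / 2 - β))
    (hψ : ψ ≤ (1 / 2 - β) / (3 / 2 - β))
    (x : Fin d → ℝ) (hx : Mnorm (H xstar) (x - xstar) ≤ ν * lmin ^ ((3 : ℝ) / 2) / L)
    (Ht : Matrix (Fin d) (Fin d) ℝ)
    (hHt1 : (Ht - (1 - ψ) • H x).PosSemidef) :
    Mnorm (H xstar) (x + -(Ht⁻¹.mulVec (g x)) - xstar) ≤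
      3 * ((L / lmin ^ ((3 : ℝ) / 2)) * Mnorm (H xstar) (x - xstar) ^ 2 +
        specNorm (1 - ((hpsd x).sqrt)⁻¹ * Ht * ((hpsd x).sqrt)⁻¹) *
          Mnorm (H xstar) (x - xstar)) := by
  have hHsym (y : Fin d → ℝ) : (H y).IsSymm :=
    Matrix.isHermitian_iff_isSymm.mp (hpsd y).isHermitian
  have hgstar : g xstar = 0 :=
    gradient_eq_zero_of_isLocalMin hgrad (Filter.Eventually.of_forall hmin)
  have hψ3 : ψ ≤ 1 / 3 := hψ.trans (by rw [div_le_iff₀ (by linarith)]; linarith)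
  have htaylor := vnorm_hessian_mulVec_sub_gradient_sub_le hf hgrad hhess hHsym hL.le hLip x xstar
  rw [hgstar, sub_zero] at htaylor
  have hstep := mul_Mnorm_newton_error_le (hpsd x) hlmin (hlow x) (hlow xstar) (hLip x xstar)
    (by linarith : (0 : ℝ) < 1 - ψ) hHt1 (x - xstar) (g x)
  rw [show x - xstar - Ht⁻¹ *ᵥ g x = x + -(Ht⁻¹ *ᵥ g x) - xstar by abel] at hstep
  exact newton_error_le_of_bounds hlmin hL (by linarith) hψ3 (vnorm_nonneg _) (specNorm_nonneg _)
    (sqrt_mul_vnorm_le_Mnorm (hlow xstar) _) hx htaylor (vnorm_nonneg _) hstep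

/-- Lemma 6 in the paper: the linear–quadratic error recursion for the
Newton step with an approximate Hessian. -/
theorem stmt7
    {d : ℕ} (f : (Fin d → ℝ) → ℝ) (g : (Fin d → ℝ) → Fin d → ℝ)
    (H : (Fin d → ℝ) → Matrix (Fin d) (Fin d) ℝ)
    (lmin lmax L : ℝ) (hlmin : 0 < lmin) (hlle : lmin ≤ lmax) (hL : 0 < L)
    (hf : ContDiff ℝ 2 f)
    (hgrad : ∀ y v, fderiv ℝ f y v = dotProduct (g y) v)
    (hhess : ∀ y u v, fderiv ℝ (fun z => fderiv ℝ f z v) y u =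
      dotProduct u ((H y).mulVec v))
    (hHsym : ∀ y, (H y).IsSymm)
    (hpsd : ∀ y, (H y).PosSemidef)
    (hlow : ∀ y, (H y - lmin • (1 : Matrix (Fin d) (Fin d) ℝ)).PosSemidef)
    (hup : ∀ y, (lmax • (1 : Matrix (Fin d) (Fin d) ℝ) - H y).PosSemidef)
    (hLip : ∀ y z, specNorm (H y - H z) ≤ L * vnorm (y - z))
    (xstar : Fin d → ℝ) (hmin : ∀ y, f xstar ≤ f y)
    (huniq : ∀ y, (∀ z, f y ≤ f z) → y = xstar)
    (β ν ψ : ℝ) (hβ0 : 0 < β) (hβ : β < 1 / 2)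
    (hν0 : 0 < ν) (hν : ν ≤ (2 / 3) * (1 / 2 - β))
    (hψ0 : 0 < ψ) (hψ : ψ ≤ (1 / 2 - β) / (3 / 2 - β))
    (x : Fin d → ℝ) (hx : Mnorm (H xstar) (x - xstar) ≤ ν * lmin ^ ((3 : ℝ) / 2) / L)
    (Ht : Matrix (Fin d) (Fin d) ℝ) (hHtsym : Ht.IsSymm)
    (hHt1 : (Ht - (1 - ψ) • H x).PosSemidef)
    (hHt2 : ((1 + ψ) • H x - Ht).PosSemidef) :
    Mnorm (H xstar) (x + -(Ht⁻¹.mulVec (g x)) - xstar) ≤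
      3 * ((L / lmin ^ ((3 : ℝ) / 2)) * Mnorm (H xstar) (x - xstar) ^ 2 +
        specNorm (1 - ((hpsd x).sqrt)⁻¹ * Ht * ((hpsd x).sqrt)⁻¹) *
          Mnorm (H xstar) (x - xstar)) :=
  stmt7_general f g H lmin L hlmin hL hf hgrad hhess hpsd hlow hLip xstar hmin β ν ψ hβ0 hβ hν hψ x
    hx Ht hHt1
end

section
/- Let w : ℝ → ℝ be twice differentiable with w(-1) = 0, w(t) > 0 for all t ≥ 0, w'(-1) ≥ 0, w''(t) ≥ 0 for all t ≥ -1, and w(t+1)/w(t) ∨ w'(t+1)/w'(t) ≤ Ψ for all t ≥ 0 with Ψ ≥ 1. For an integer t ≥ 0 define z_{i,t} = (w(i) - w(i-1))/w(t) for i = 0,1,…,t. Then Σ_{i=0}^t z_{i,t}² ≤ Ψ²·w'(t)/w(t) and max_{0≤i≤t} z_{i,t} ≤ w'(t)/w(t). -/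
/-!
Convexity of `w` on `[-1, ∞)` makes `w'` nondecreasing there, so by the mean value theorem each
increment `w i - w (i - 1)` lies between `w'(-1) ≥ 0` and `w'(t)`. The increments telescope to
`w t`, so the `z_{i,t}` are nonnegative, bounded by `m = w'(t)/w(t)` and sum to at most `1`; hence
`Σ z_{i,t}² ≤ m · Σ z_{i,t} ≤ m ≤ Ψ² m`.
-/

open Finset Set

lemma monotoneOn_Ici_of_deriv_nonneg {f : ℝ → ℝ} {a : ℝ} (hf : Differentiable ℝ f)
    (hf' : ∀ x, a < x → 0 ≤ deriv f x) : MonotoneOn f (Ici a) :=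
  monotoneOn_of_deriv_nonneg (convex_Ici a) hf.continuous.continuousOn hf.differentiableOn
    fun x hx => hf' x (by simpa using hx)

lemma sub_sub_one_mem_Icc_deriv {f : ℝ → ℝ} {a b x : ℝ} (hf : Differentiable ℝ f)
    (hmono : MonotoneOn (deriv f) (Ici a)) (hax : a ≤ x - 1) (hxb : x ≤ b) :
    f x - f (x - 1) ∈ Icc (deriv f a) (deriv f b) := by
  obtain ⟨c, ⟨hc₁, hc₂⟩, hc⟩ := exists_deriv_eq_slope f (sub_one_lt x)
    hf.continuous.continuousOn hf.differentiableOn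
  have hinc : f x - f (x - 1) = deriv f c := by rw [hc]; ring
  have hac : a ≤ c := by linarith
  rw [hinc]
  exact ⟨hmono self_mem_Ici hac hac,
    hmono hac (mem_Ici.mpr (by linarith)) (by linarith)⟩

lemma sum_range_sub_sub_one (f : ℝ → ℝ) (t : ℕ) :
    ∑ i ∈ range (t + 1), (f i - f ((i : ℝ) - 1)) = f t - f (-1) := by
  have h := sum_range_sub (fun n : ℕ => f ((n : ℝ) - 1)) (t + 1)
  simp only [Nat.cast_add, Nat.cast_one, add_sub_cancel_right, Nat.cast_zero, zero_sub] at h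
  exact h

lemma sum_sq_le_of_le_of_sum_le_one {ι : Type*} {s : Finset ι} {z : ι → ℝ} {m : ℝ}
    (hz₀ : ∀ i ∈ s, 0 ≤ z i) (hzm : ∀ i ∈ s, z i ≤ m) (hm : 0 ≤ m) (hsum : ∑ i ∈ s, z i ≤ 1) :
    ∑ i ∈ s, z i ^ 2 ≤ m :=
  calc ∑ i ∈ s, z i ^ 2 ≤ ∑ i ∈ s, m * z i :=
        sum_le_sum fun i hi => by rw [sq]; exact mul_le_mul_of_nonneg_right (hzm i hi) (hz₀ i hi)
    _ = m * ∑ i ∈ s, z i := (mul_sum s z m).symm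
    _ ≤ m := mul_le_of_le_one_right hm hsum

theorem stmt12_general
    (w : ℝ → ℝ) (Ψ : ℝ) (hΨ : 1 ≤ Ψ)
    (hw1 : Differentiable ℝ w) (hw2 : Differentiable ℝ (deriv w))
    (hwneg1 : w (-1) = 0)
    (hw'neg1 : 0 ≤ deriv w (-1)) (hw'' : ∀ s : ℝ, -1 ≤ s → 0 ≤ deriv (deriv w) s)
    (t : ℕ) :
    (∑ i ∈ Finset.range (t + 1), ((w i - w ((i : ℝ) - 1)) / w t) ^ 2 ≤
        Ψ ^ 2 * deriv w t / w t) ∧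
    ((Finset.range (t + 1)).sup' (Finset.nonempty_range_iff.mpr t.succ_ne_zero)
        (fun i => (w i - w ((i : ℝ) - 1)) / w t) ≤ deriv w t / w t) := by
  have hmono : MonotoneOn (deriv w) (Ici (-1)) :=
    monotoneOn_Ici_of_deriv_nonneg hw2 fun x hx => hw'' x hx.le
  have hinc : ∀ i ∈ range (t + 1), w i - w ((i : ℝ) - 1) ∈ Icc (deriv w (-1)) (deriv w t) :=
    fun i hi => sub_sub_one_mem_Icc_deriv hw1 hmono (by simp)
      (by exact_mod_cast Nat.lt_succ_iff.mp (mem_range.mp hi))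
  have htel : ∑ i ∈ range (t + 1), (w i - w ((i : ℝ) - 1)) = w t := by
    rw [sum_range_sub_sub_one, hwneg1, sub_zero]
  have hinc₀ : ∀ i ∈ range (t + 1), 0 ≤ w i - w ((i : ℝ) - 1) :=
    fun i hi => hw'neg1.trans (hinc i hi).1
  have hwt : 0 ≤ w t := htel ▸ sum_nonneg hinc₀
  have hzm : ∀ i ∈ range (t + 1), (w i - w ((i : ℝ) - 1)) / w t ≤ deriv w t / w t :=
    fun i hi => div_le_div_of_nonneg_right (hinc i hi).2 hwt
  refine ⟨?_, sup'_le _ _ hzm⟩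
  have ht : (-1 : ℝ) ≤ t := by linarith [t.cast_nonneg (α := ℝ)]
  have hm : 0 ≤ deriv w t / w t := div_nonneg (hw'neg1.trans (hmono self_mem_Ici ht ht)) hwt
  calc ∑ i ∈ range (t + 1), ((w i - w ((i : ℝ) - 1)) / w t) ^ 2 ≤ deriv w t / w t :=
        sum_sq_le_of_le_of_sum_le_one (fun i hi => div_nonneg (hinc₀ i hi) hwt) hzm hm
          (by rw [← sum_div, htel]; exact div_self_le_one _)
    _ ≤ Ψ ^ 2 * deriv w t / w t := by
        rw [mul_div_assoc]; exact le_mul_of_one_le_left hm (one_le_pow₀ hΨ)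

/-- deterministic weight bounds for a weight function `w` satisfying
Assumption 5: `Σ z_{i,t}² ≤ Ψ²·w'(t)/w(t)` and `max_i z_{i,t} ≤ w'(t)/w(t)`. -/
theorem stmt12
    (w : ℝ → ℝ) (Ψ : ℝ) (hΨ : 1 ≤ Ψ)
    (hw1 : Differentiable ℝ w) (hw2 : Differentiable ℝ (deriv w))
    (hwneg1 : w (-1) = 0) (hwpos : ∀ s : ℝ, 0 ≤ s → 0 < w s)
    (hw'neg1 : 0 ≤ deriv w (-1)) (hw'' : ∀ s : ℝ, -1 ≤ s → 0 ≤ deriv (deriv w) s)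
    (hratio : ∀ s : ℝ, 0 ≤ s →
      max (w (s + 1) / w s) (deriv w (s + 1) / deriv w s) ≤ Ψ)
    (t : ℕ) :
    (∑ i ∈ Finset.range (t + 1), ((w i - w ((i : ℝ) - 1)) / w t) ^ 2 ≤
        Ψ ^ 2 * deriv w t / w t) ∧
    ((Finset.range (t + 1)).sup' (Finset.nonempty_range_iff.mpr t.succ_ne_zero)
        (fun i => (w i - w ((i : ℝ) - 1)) / w t) ≤ deriv w t / w t) :=
  stmt12_general w Ψ hΨ hw1 hw2 hwneg1 hw'neg1 hw'' t
end
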